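/- arXiv:1702.02673 — 3 statements merged into one kernel-verified Lean document; each statement's English description precedes it below -/
import Mathlib

section
/- In the 2-user energy cooperation model with efficiencies α₁₂, α₂₁ ∈ (0,1), for every feasible (δ₁₂, δ₂₁) with δ₁₂, δ₂₁ ≥ 0, there exists a feasible (δ'₁₂, δ'₂₁) with δ'₁₂ * δ'₂₁ = 0 (i.e., at most one direction of transfer) yielding componentwise at least as large transmit powers p₁ and p₂, where p₁ = p̃₁ - δ₁₂/T + α₂₁ δ₂₁/T and p₂ = p̃₂ - δ₂₁/T + α₁₂ δ₁₂/T. -/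
/-!
User `i`'s transmit power depends on the transfers only through its net outflow
`δᵢⱼ - αⱼᵢ δⱼᵢ`. If `α₂₁ δ₂₁ ≤ δ₁₂`, replacing the pair by `(δ₁₂ - α₂₁ δ₂₁, 0)` keeps user 1's net
outflow and changes user 2's by `(α₁₂ α₂₁ - 1) δ₂₁ ≤ 0`; otherwise `α₁₂ δ₁₂ ≤ δ₂₁` and the
symmetric replacement works. Both new flows are below the old ones, so feasibility is inherited.
-/

noncomputable def transmitPower (T pbar α δout δin : ℝ) : ℝ :=
  pbar - δout / T + α * δin / T

lemma transmitPower_le_transmitPower_iff {T pbar α δout δin δout' δin' : ℝ} (hT : 0 < T) :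
    transmitPower T pbar α δout δin ≤ transmitPower T pbar α δout' δin' ↔
      δout' - α * δin' ≤ δout - α * δin := by
  have net (a b : ℝ) : transmitPower T pbar α a b = pbar - (a - α * b) / T := by
    unfold transmitPower; ring
  rw [net, net, sub_le_sub_iff_left, div_le_div_iff_of_pos_right hT]

lemma exists_one_way_transfer_of_le {α β x y : ℝ} (hα : 0 ≤ α) (hαβ : β * α ≤ 1)
    (hy : 0 ≤ y) (h : α * y ≤ x) :
    ∃ x' y', 0 ≤ x' ∧ 0 ≤ y' ∧ x' ≤ x ∧ y' ≤ y ∧ x' * y' = 0 ∧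
      x' - α * y' ≤ x - α * y ∧ y' - β * x' ≤ y - β * x := by
  have hβα : β * α * y ≤ y := mul_le_of_le_one_left hy hαβ
  refine ⟨x - α * y, 0, by linarith, le_rfl, by linarith [mul_nonneg hα hy], hy, by ring,
    by linarith, by linarith⟩

lemma exists_one_way_transfer {α β x y : ℝ} (hα : 0 ≤ α) (hβ : 0 ≤ β) (hαβ : β * α ≤ 1)
    (hx : 0 ≤ x) (hy : 0 ≤ y) :
    ∃ x' y', 0 ≤ x' ∧ 0 ≤ y' ∧ x' ≤ x ∧ y' ≤ y ∧ x' * y' = 0 ∧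
      x' - α * y' ≤ x - α * y ∧ y' - β * x' ≤ y - β * x := by
  rcases le_or_gt (α * y) x with h | h
  · exact exists_one_way_transfer_of_le hα hαβ hy h
  · have h' : β * x ≤ y := calc
      β * x ≤ β * (α * y) := mul_le_mul_of_nonneg_left h.le hβ
      _ = β * α * y := by ring
      _ ≤ y := mul_le_of_le_one_left hy hαβ
    obtain ⟨y', x', hy', hx', hyy, hxx, hprod, hnety, hnetx⟩ :=
      exists_one_way_transfer_of_le hβ (by rwa [mul_comm]) hx h'
    exact ⟨x', y', hx', hy', hxx, hyy, by rw [mul_comm, hprod], hnetx, hnety⟩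

theorem stmt_8_general (T pbar1 pbar2 α12 α21 δ12 δ21 : ℝ) (hT : 0 < T)
    (hα12 : α12 ∈ Set.Ioo (0 : ℝ) 1) (hα21 : α21 ∈ Set.Ioo (0 : ℝ) 1)
    (hδ12 : 0 ≤ δ12) (hδ21 : 0 ≤ δ21)
    (hb1 : δ12 ≤ T * pbar1) (hb2 : δ21 ≤ T * pbar2)
    (hpt1 : 0 ≤ pbar1 - δ12 / T + α21 * δ21 / T)
    (hpt2 : 0 ≤ pbar2 - δ21 / T + α12 * δ12 / T) :
    ∃ δ12' δ21' : ℝ, 0 ≤ δ12' ∧ 0 ≤ δ21' ∧ δ12' ≤ T * pbar1 ∧ δ21' ≤ T * pbar2 ∧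
      δ12' * δ21' = 0 ∧
      0 ≤ pbar1 - δ12' / T + α21 * δ21' / T ∧
      0 ≤ pbar2 - δ21' / T + α12 * δ12' / T ∧
      pbar1 - δ12 / T + α21 * δ21 / T ≤ pbar1 - δ12' / T + α21 * δ21' / T ∧
      pbar2 - δ21 / T + α12 * δ12 / T ≤ pbar2 - δ21' / T + α12 * δ12' / T := by
  have hαα : α12 * α21 ≤ 1 :=
    (mul_le_of_le_one_left hα21.1.le hα12.2.le).trans hα21.2.le
  obtain ⟨d12, d21, hd12, hd21, hle12, hle21, hprod, hnet1, hnet2⟩ :=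
    exists_one_way_transfer hα21.1.le hα12.1.le hαα hδ12 hδ21
  have hp1 : transmitPower T pbar1 α21 δ12 δ21 ≤ transmitPower T pbar1 α21 d12 d21 :=
    (transmitPower_le_transmitPower_iff hT).2 hnet1
  have hp2 : transmitPower T pbar2 α12 δ21 δ12 ≤ transmitPower T pbar2 α12 d21 d12 :=
    (transmitPower_le_transmitPower_iff hT).2 hnet2
  exact ⟨d12, d21, hd12, hd21, hle12.trans hb1, hle21.trans hb2, hprod,
    hpt1.trans hp1, hpt2.trans hp2, hp1, hp2⟩

theorem stmt_8 (T pbar1 pbar2 α12 α21 δ12 δ21 : ℝ) (hT : 0 < T)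
    (hp1 : 0 ≤ pbar1) (hp2 : 0 ≤ pbar2)
    (hα12 : α12 ∈ Set.Ioo (0 : ℝ) 1) (hα21 : α21 ∈ Set.Ioo (0 : ℝ) 1)
    (hδ12 : 0 ≤ δ12) (hδ21 : 0 ≤ δ21)
    (hb1 : δ12 ≤ T * pbar1) (hb2 : δ21 ≤ T * pbar2)
    (hpt1 : 0 ≤ pbar1 - δ12 / T + α21 * δ21 / T)
    (hpt2 : 0 ≤ pbar2 - δ21 / T + α12 * δ12 / T) :
    ∃ δ12' δ21' : ℝ, 0 ≤ δ12' ∧ 0 ≤ δ21' ∧ δ12' ≤ T * pbar1 ∧ δ21' ≤ T * pbar2 ∧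
      δ12' * δ21' = 0 ∧
      0 ≤ pbar1 - δ12' / T + α21 * δ21' / T ∧
      0 ≤ pbar2 - δ21' / T + α12 * δ12' / T ∧
      pbar1 - δ12 / T + α21 * δ21 / T ≤ pbar1 - δ12' / T + α21 * δ21' / T ∧
      pbar2 - δ21 / T + α12 * δ12 / T ≤ pbar2 - δ21' / T + α12 * δ12' / T :=
  stmt_8_general T pbar1 pbar2 α12 α21 δ12 δ21 hT hα12 hα21 hδ12 hδ21 hb1 hb2 hpt1 hpt2
end

section
/- Let e : ℕ → ℝ be an i.i.d. sequence of nonnegative integrable random variables with mean ē > 0, and let p̃ < ē. With the save-and-transmit schedule (consume 0 in slots 1..h(N), consume p̃ per slot afterwards, where h : ℕ → ℕ satisfies h(N) → ∞), the probability that energy causality is ever violated, i.e., P(∃ i ≤ N, Σ_{j=1}^i consumed(j) > Σ_{j=1}^i e j), tends to 0 as N → ∞. -/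
open MeasureTheory ProbabilityTheory Filter Finset

/-!
By the strong law of large numbers, applied to the shifted sequence `e 1, e 2, …`, almost
surely `∑_{j=1}^i e j ≥ i · max pbar 0` for all large `i`. Since the schedule consumes nothing
before slot `h N + 1` and at most `max pbar 0` per slot afterwards, a violation forces such an
inequality to fail at some `i > h N`. The probability of a failure beyond slot `m` tends to `0`
as `m → ∞`, and `h N → ∞`.
-/

def saveTransmitPower (h : ℕ) (p : ℝ) (j : ℕ) : ℝ := if j ≤ h then 0 else p

lemma sum_Icc_saveTransmitPower_eq_zero {h i : ℕ} (hi : i ≤ h) (p : ℝ) :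
    ∑ j ∈ Icc 1 i, saveTransmitPower h p j = 0 :=
  sum_eq_zero fun _ hj => if_pos ((mem_Icc.1 hj).2.trans hi)

lemma sum_Icc_saveTransmitPower_le (h i : ℕ) (p : ℝ) :
    ∑ j ∈ Icc 1 i, saveTransmitPower h p j ≤ i * max p 0 :=
  calc ∑ j ∈ Icc 1 i, saveTransmitPower h p j ≤ ∑ _j ∈ Icc 1 i, max p 0 :=
        sum_le_sum fun j _ => by unfold saveTransmitPower; split_ifs <;> simp
    _ = i * max p 0 := by simp

lemma lt_of_sum_Icc_lt_sum_saveTransmitPower {x : ℕ → ℝ} (hx : ∀ j, 0 ≤ x j) {h i : ℕ} {p : ℝ}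
    (hviol : ∑ j ∈ Icc 1 i, x j < ∑ j ∈ Icc 1 i, saveTransmitPower h p j) :
    h < i ∧ ∑ j ∈ Icc 1 i, x j < i * max p 0 := by
  refine ⟨?_, hviol.trans_le (sum_Icc_saveTransmitPower_le h i p)⟩
  by_contra! hi
  rw [sum_Icc_saveTransmitPower_eq_zero hi] at hviol
  exact (sum_nonneg fun j _ => hx j).not_gt hviol

lemma eventually_mul_lt_of_tendsto_div {S : ℕ → ℝ} {L p : ℝ}
    (hS : Tendsto (fun n : ℕ => S n / n) atTop (nhds L)) (hp : p < L) :
    ∀ᶠ n : ℕ in atTop, n * p < S n := by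
  filter_upwards [hS.eventually (eventually_gt_nhds hp), eventually_gt_atTop 0] with n hn hn0
  rwa [lt_div_iff₀ (by exact_mod_cast hn0), mul_comm] at hn

theorem tendsto_measure_biUnion_Ici_of_ae_eventually_notMem {α : Type*} [MeasurableSpace α]
    {μ : Measure α} [IsFiniteMeasure μ] {s : ℕ → Set α} (hs : ∀ i, NullMeasurableSet (s i) μ)
    (h : ∀ᵐ x ∂μ, ∀ᶠ i in atTop, x ∉ s i) :
    Tendsto (fun m => μ (⋃ i ≥ m, s i)) atTop (nhds 0) := by
  have hlimsup : μ (⋂ m, ⋃ i ≥ m, s i) = 0 := by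
    rw [measure_eq_zero_iff_ae_notMem]
    filter_upwards [h] with x hx
    obtain ⟨m, hm⟩ := hx.exists_forall_of_atTop
    simpa using ⟨m, hm⟩
  rw [← hlimsup]
  exact tendsto_measure_iInter_atTop
    (fun m => .iUnion fun i => .iUnion fun _ => hs i)
    (fun m m' hmm' => Set.biUnion_mono (fun i hi => hmm'.trans hi) fun _ _ => le_rfl)
    ⟨0, measure_ne_top μ _⟩

theorem strong_law_ae_real_sum_Icc {Ω : Type*} [MeasurableSpace Ω] {μ : Measure Ω}
    (X : ℕ → Ω → ℝ) (hint : Integrable (X 0) μ) (hindep : iIndepFun X μ)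
    (hident : ∀ i, IdentDistrib (X i) (X 0) μ μ) :
    ∀ᵐ ω ∂μ, Tendsto (fun n : ℕ => (∑ i ∈ Icc 1 n, X i ω) / n) atTop (nhds μ[X 0]) := by
  have hshift := strong_law_ae_real (fun i => X (i + 1)) ((hident 1).integrable_iff.2 hint)
    (fun i j hij => hindep.indepFun (by simpa using hij))
    (fun i => (hident (i + 1)).trans (hident 1).symm)
  filter_upwards [hshift] with ω hω
  have hsum (n : ℕ) : ∑ i ∈ range n, X (i + 1) ω = ∑ i ∈ Icc 1 n, X i ω := by
    rw [range_eq_Ico, sum_Ico_add' (fun i => X i ω), ← Ico_add_one_right_eq_Icc, zero_add]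
  simpa only [hsum, zero_add, (hident 1).integral_eq] using hω

theorem stmt_10_general {Ω : Type*} [MeasurableSpace Ω] (μ : Measure Ω) [IsProbabilityMeasure μ]
    (e : ℕ → Ω → ℝ)
    (hindep : iIndepFun e μ)
    (hident : ∀ i, IdentDistrib (e i) (e 0) μ μ)
    (hnonneg : ∀ i, ∀ ω, 0 ≤ e i ω)
    (hint : Integrable (e 0) μ)
    (ebar : ℝ) (hmean : μ[e 0] = ebar) (hebar : 0 < ebar)
    (pbar : ℝ) (hpbar : pbar < ebar)
    (h : ℕ → ℕ) (hh : Tendsto h atTop atTop) :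
    Tendsto (fun N =>
        μ {ω | ∃ i ≤ N,
          (∑ j ∈ Finset.Icc 1 i, (if j ≤ h N then (0 : ℝ) else pbar)) >
            ∑ j ∈ Finset.Icc 1 i, e j ω})
      atTop (nhds 0) := by
  set A : ℕ → Set Ω := fun i => {ω | ∑ j ∈ Icc 1 i, e j ω < i * max pbar 0}
  have hA : ∀ i, NullMeasurableSet (A i) μ := fun i =>
    nullMeasurableSet_lt (Finset.aemeasurable_fun_sum _ fun j _ => (hident j).aemeasurable_fst)
      aemeasurable_const
  have hA_ae : ∀ᵐ ω ∂μ, ∀ᶠ i in atTop, ω ∉ A i := by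
    filter_upwards [strong_law_ae_real_sum_Icc e hint hindep hident] with ω hω
    exact (eventually_mul_lt_of_tendsto_div hω (hmean ▸ max_lt hpbar hebar)).mono
      fun i hi => hi.not_gt
  have hlim := (tendsto_measure_biUnion_Ici_of_ae_eventually_notMem hA hA_ae).comp
    ((tendsto_add_atTop_nat 1).comp hh)
  refine tendsto_of_tendsto_of_tendsto_of_le_of_le tendsto_const_nhds hlim (fun _ => zero_le)
    fun N => measure_mono ?_
  rintro ω ⟨i, -, hviol⟩
  obtain ⟨hi, hlt⟩ := lt_of_sum_Icc_lt_sum_saveTransmitPower (hnonneg · ω) hviol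
  exact Set.mem_biUnion (show h N + 1 ≤ i from hi) hlt

theorem stmt_10 {Ω : Type*} [MeasurableSpace Ω] (μ : Measure Ω) [IsProbabilityMeasure μ]
    (e : ℕ → Ω → ℝ) (hmeas : ∀ i, Measurable (e i))
    (hindep : iIndepFun e μ)
    (hident : ∀ i, IdentDistrib (e i) (e 0) μ μ)
    (hnonneg : ∀ i, ∀ ω, 0 ≤ e i ω)
    (hint : Integrable (e 0) μ)
    (ebar : ℝ) (hmean : μ[e 0] = ebar) (hebar : 0 < ebar)
    (pbar : ℝ) (hpbar : pbar < ebar)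
    (h : ℕ → ℕ) (hh : Tendsto h atTop atTop) :
    Tendsto (fun N =>
        μ {ω | ∃ i ≤ N,
          (∑ j ∈ Finset.Icc 1 i, (if j ≤ h N then (0 : ℝ) else pbar)) >
            ∑ j ∈ Finset.Icc 1 i, e j ω})
      atTop (nhds 0) :=
  stmt_10_general μ e hindep hident hnonneg hint ebar hmean hebar pbar hpbar h hh
end

section
/- Let F be a compact set of feasible power vectors p ∈ (ℝ≥0)^K and define C = ⋃_{p ∈ F} C(p) where C(p) = {R ∈ (ℝ≥0)^K | ∀ S, Σ_{k∈S} R k ≤ (1/2) log(1 + Σ_{k∈S} p k)}. Then C is compact; if moreover F is convex, then C is convex. -/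
/-!
`C` is the projection to the second factor of the graph `G = {(p, R) | p ∈ F, R ∈ C(p)}`.
`G` is closed, since `p ↦ ½ log (1 + ∑_{k ∈ S} p k)` is continuous where `p ≥ 0`, and bounded,
since `R k ≤ ½ log (1 + M k)` for an upper bound `M` of `F`; so `G` is compact. If `F` is convex,
concavity of `x ↦ ½ log (1 + x)` makes `G` convex, hence also its linear image `C`.
-/

open Real Set

theorem concaveOn_half_log_one_add : ConcaveOn ℝ (Ici 0) fun x : ℝ => 1 / 2 * log (1 + x) := by
  refine ((strictConcaveOn_log_Ioi.concaveOn.translate_right 1).subset ?_ ?_).smul (by norm_num)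
  · intro x (hx : 0 ≤ x)
    show 0 < 1 + x
    linarith
  · exact convex_Ici 0

section

variable {ι : Type*}

/-- The capacity region `C(p)` of the Gaussian multiple-access channel with transmit powers `p`. -/
def gaussianMACRegion (p : ι → ℝ) : Set (ι → ℝ) :=
  {R | (∀ k, 0 ≤ R k) ∧ ∀ S : Finset ι, ∑ k ∈ S, R k ≤ 1 / 2 * log (1 + ∑ k ∈ S, p k)}

theorem smul_add_smul_mem_gaussianMACRegion {p q R R' : ι → ℝ} {a b : ℝ}
    (hp : ∀ k, 0 ≤ p k) (hq : ∀ k, 0 ≤ q k)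
    (hR : R ∈ gaussianMACRegion p) (hR' : R' ∈ gaussianMACRegion q)
    (ha : 0 ≤ a) (hb : 0 ≤ b) (hab : a + b = 1) :
    a • R + b • R' ∈ gaussianMACRegion (a • p + b • q) := by
  refine ⟨fun k => ?_, fun S => ?_⟩
  · have := hR.1 k
    have := hR'.1 k
    simp only [Pi.add_apply, Pi.smul_apply, smul_eq_mul]
    positivity
  · simp only [Pi.add_apply, Pi.smul_apply, smul_eq_mul, Finset.sum_add_distrib,
      ← Finset.mul_sum]
    calc a * ∑ k ∈ S, R k + b * ∑ k ∈ S, R' k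
        ≤ a * (1 / 2 * log (1 + ∑ k ∈ S, p k)) + b * (1 / 2 * log (1 + ∑ k ∈ S, q k)) := by
          gcongr
          exacts [hR.2 S, hR'.2 S]
      _ ≤ 1 / 2 * log (1 + (a * ∑ k ∈ S, p k + b * ∑ k ∈ S, q k)) :=
          concaveOn_half_log_one_add.2 (Finset.sum_nonneg fun k _ => hp k)
            (Finset.sum_nonneg fun k _ => hq k) ha hb hab

theorem gaussianMACRegion_subset_Icc {p M : ι → ℝ} (hp : ∀ k, 0 ≤ p k) (hpM : p ≤ M) :
    gaussianMACRegion p ⊆ Icc 0 fun k => 1 / 2 * log (1 + M k) := by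
  intro R hR
  refine ⟨hR.1, fun k => ?_⟩
  have hRk := hR.2 {k}
  simp only [Finset.sum_singleton] at hRk
  have := log_le_log (by linarith [hp k]) (by linarith [hpM k] : 1 + p k ≤ 1 + M k)
  show R k ≤ 1 / 2 * log (1 + M k)
  linarith

def gaussianMACGraph (F : Set (ι → ℝ)) : Set ((ι → ℝ) × (ι → ℝ)) :=
  {x | x.1 ∈ F ∧ x.2 ∈ gaussianMACRegion x.1}

variable {F : Set (ι → ℝ)}

theorem image_snd_gaussianMACGraph :
    Prod.snd '' gaussianMACGraph F = ⋃ p ∈ F, gaussianMACRegion p := by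
  ext R
  simp [gaussianMACGraph]

theorem isClosed_gaussianMACGraph (hF : IsClosed F) (hF0 : ∀ p ∈ F, ∀ k, 0 ≤ p k) :
    IsClosed (gaussianMACGraph F) := by
  have hF' : IsClosed (Prod.fst ⁻¹' F : Set ((ι → ℝ) × (ι → ℝ))) := hF.preimage continuous_fst
  have hlog : ∀ S : Finset ι, ContinuousOn
      (fun x : (ι → ℝ) × (ι → ℝ) => 1 / 2 * log (1 + ∑ k ∈ S, x.1 k)) (Prod.fst ⁻¹' F) := by
    intro S
    refine continuousOn_const.mul (ContinuousOn.log ?_ fun x hx => ?_)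
    · fun_prop
    have : 0 ≤ ∑ k ∈ S, x.1 k := Finset.sum_nonneg fun k _ => hF0 x.1 hx k
    positivity
  have hsplit : gaussianMACGraph F = Prod.fst ⁻¹' F ∩
      ((⋂ k, {x : (ι → ℝ) × (ι → ℝ) | 0 ≤ x.2 k}) ∩
        ⋂ S : Finset ι, {x : (ι → ℝ) × (ι → ℝ) | x ∈ Prod.fst ⁻¹' F ∧
          ∑ k ∈ S, x.2 k ≤ 1 / 2 * log (1 + ∑ k ∈ S, x.1 k)}) := by
    ext x
    simp only [gaussianMACGraph, gaussianMACRegion, mem_ofPred_eq, mem_inter_iff, mem_iInter,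
      mem_preimage, forall_and, forall_const]
    tauto
  rw [hsplit]
  exact hF'.inter <| (isClosed_iInter fun k => isClosed_le continuous_const (by fun_prop)).inter
    (isClosed_iInter fun S => hF'.isClosed_le (by fun_prop) (hlog S))

theorem isCompact_gaussianMACGraph (hF : IsCompact F) (hF0 : ∀ p ∈ F, ∀ k, 0 ≤ p k) :
    IsCompact (gaussianMACGraph F) := by
  obtain ⟨M, hM⟩ : BddAbove F :=
    bddAbove_pi.2 fun k => hF.bddAbove_image (continuous_apply k).continuousOn
  exact (hF.prod isCompact_Icc).of_isClosed_subset (isClosed_gaussianMACGraph hF.isClosed hF0)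
    fun x hx => ⟨hx.1, gaussianMACRegion_subset_Icc (hF0 x.1 hx.1) (hM hx.1) hx.2⟩

theorem convex_gaussianMACGraph (hF : Convex ℝ F) (hF0 : ∀ p ∈ F, ∀ k, 0 ≤ p k) :
    Convex ℝ (gaussianMACGraph F) := by
  rintro ⟨p, R⟩ ⟨hp, hR⟩ ⟨q, R'⟩ ⟨hq, hR'⟩ a b ha hb hab
  exact ⟨hF hp hq ha hb hab,
    smul_add_smul_mem_gaussianMACRegion (hF0 p hp) (hF0 q hq) hR hR' ha hb hab⟩

end

theorem stmt_19 (K : ℕ) (F : Set (Fin K → ℝ)) (hF : IsCompact F)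
    (hFnonneg : ∀ p ∈ F, ∀ k, 0 ≤ p k) :
    let C : Set (Fin K → ℝ) := ⋃ p ∈ F, {R | (∀ k, 0 ≤ R k) ∧
      ∀ S : Finset (Fin K), ∑ k ∈ S, R k ≤ (1 / 2) * Real.log (1 + ∑ k ∈ S, p k)}
    IsCompact C ∧ (Convex ℝ F → Convex ℝ C) := by
  intro C
  have hC : C = Prod.snd '' gaussianMACGraph F := image_snd_gaussianMACGraph.symm
  rw [hC]
  exact ⟨(isCompact_gaussianMACGraph hF hFnonneg).image continuous_snd, fun hFconv =>
    (convex_gaussianMACGraph hFconv hFnonneg).linear_image (LinearMap.snd ℝ _ _)⟩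
end
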